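/- arXiv:1912.07594 — 9 statements merged into one kernel-verified Lean document; each statement's English description precedes it below -/
import Mathlib

section
/- The polynomial m(x) = x(x+1)(x² - (s-1)x - st) is the minimal polynomial of the matrix A(H) = [[J_{s×s} - I_s, J_{s×t}], [J_{t×s}, 0_{t×t}]]; that is, m(A(H)) = 0 and no nonzero polynomial of degree at most 3 annihilates A(H). -/
open Matrix Polynomial

/-- The all-ones matrix. -/
def Jmat (m n : ℕ) : Matrix (Fin m) (Fin n) ℝ := Matrix.of fun _ _ => 1

/-- The adjacency matrix of `K_s ∇ tK_1` in block form. -/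
def AH (s t : ℕ) : Matrix (Fin s ⊕ Fin t) (Fin s ⊕ Fin t) ℝ :=
  Matrix.fromBlocks (Jmat s s - 1) (Jmat s t) (Jmat t s) 0

lemma Jmul (a b c : ℕ) : Jmat a b * Jmat b c = (b:ℝ) • Jmat a c := by
  ext i j; simp [Jmat, Matrix.mul_apply]

lemma L2 (s t : ℕ) : (Jmat s s - 1) * Jmat s t = ((s:ℝ)-1) • Jmat s t := by
  rw [Matrix.sub_mul, Jmul, Matrix.one_mul, sub_smul, one_smul]

lemma L3 (s t : ℕ) : Jmat t s * (Jmat s s - 1) = ((s:ℝ)-1) • Jmat t s := by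
  rw [Matrix.mul_sub, Jmul, Matrix.mul_one, sub_smul, one_smul]

lemma L1 (s : ℕ) : (Jmat s s - 1) * (Jmat s s - 1) = ((s:ℝ)-2) • Jmat s s + 1 := by
  rw [Matrix.sub_mul, L3, Matrix.one_mul]
  ext i j
  by_cases h : i = j <;> simp [Jmat, Matrix.one_apply, h] <;> ring

lemma AH_sq (s t : ℕ) : AH s t ^ 2 =
    Matrix.fromBlocks (((s:ℝ)-2+(t:ℝ)) • Jmat s s + 1) (((s:ℝ)-1) • Jmat s t)
      (((s:ℝ)-1) • Jmat t s) ((s:ℝ) • Jmat t t) := by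
  rw [pow_two, AH, Matrix.fromBlocks_multiply, L1, L2, L3, Jmul, Jmul]
  congr 1 <;> simp [add_smul] <;> abel

lemma AH_B (s t : ℕ) : AH s t ^ 2 - ((s:ℝ)-1) • AH s t - ((s:ℝ)*t) • 1 =
    Matrix.fromBlocks (((t:ℝ)-1) • Jmat s s + ((s:ℝ)*(1-(t:ℝ))) • 1) 0 0
      ((s:ℝ) • Jmat t t - ((s:ℝ)*t) • 1) := by
  rw [AH_sq, AH, ← Matrix.fromBlocks_one, Matrix.fromBlocks_smul, Matrix.fromBlocks_smul]
  ext (i|i) (j|j) <;>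
    simp [Matrix.fromBlocks, Matrix.sub_apply, Matrix.add_apply, Matrix.smul_apply,
      Matrix.one_apply, Jmat] <;> (try split) <;> ring

lemma AH_one (s t : ℕ) :
    AH s t + 1 = Matrix.fromBlocks (Jmat s s) (Jmat s t) (Jmat t s) 1 := by
  rw [AH, ← Matrix.fromBlocks_one, Matrix.fromBlocks_add]
  congr 1 <;> simp

lemma AH_C (s t : ℕ) :
    (AH s t + 1) * (AH s t ^ 2 - ((s:ℝ)-1) • AH s t - ((s:ℝ)*t) • 1) =
      Matrix.fromBlocks 0 0 0 ((s:ℝ) • Jmat t t - ((s:ℝ)*t) • 1) := by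
  rw [AH_one, AH_B, Matrix.fromBlocks_multiply]
  simp only [Matrix.mul_zero, Matrix.zero_mul, Matrix.one_mul, add_zero, zero_add,
    Matrix.mul_add, Matrix.mul_sub, Matrix.mul_smul, Matrix.mul_one, Jmul, smul_smul]
  ext (i|i) (j|j) <;>
    simp [Matrix.fromBlocks, Jmat, Matrix.sub_apply, Matrix.add_apply, Matrix.smul_apply,
      Matrix.one_apply] <;> (try split) <;> ring

lemma AH_annihilates (s t : ℕ) :
    AH s t * ((AH s t + 1) * (AH s t ^ 2 - ((s:ℝ)-1) • AH s t - ((s:ℝ)*t) • 1)) = 0 := by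
  rw [AH_C, AH, Matrix.fromBlocks_multiply]
  simp only [Matrix.mul_zero, Matrix.zero_mul, Matrix.one_mul, add_zero, zero_add,
    Matrix.mul_add, Matrix.mul_sub, Matrix.mul_smul, Matrix.mul_one, Jmul, smul_smul]
  ext (i|i) (j|j) <;>
    simp [Matrix.fromBlocks, Jmat, Matrix.sub_apply, Matrix.smul_apply, Matrix.one_apply] <;>
    (try split) <;> ring

lemma pow_mulVec {n : Type*} [Fintype n] [DecidableEq n] (A : Matrix n n ℝ) (μ : ℝ)
    (v : n → ℝ) (h : A *ᵥ v = μ • v) (k : ℕ) : (A ^ k) *ᵥ v = (μ ^ k) • v := by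
  induction k with
  | zero => simp
  | succ k ih =>
    rw [pow_succ, pow_succ, ← Matrix.mulVec_mulVec, h, Matrix.mulVec_smul, ih, smul_smul,
      mul_comm]

lemma aeval_mulVec {n : Type*} [Fintype n] [DecidableEq n] (A : Matrix n n ℝ) (μ : ℝ)
    (v : n → ℝ) (h : A *ᵥ v = μ • v) (q : ℝ[X]) :
    (Polynomial.aeval A q) *ᵥ v = q.eval μ • v := by
  induction q using Polynomial.induction_on' with
  | add p q hp hq => rw [map_add, Matrix.add_mulVec, hp, hq, eval_add, add_smul]
  | monomial k a =>
    rw [aeval_monomial, eval_monomial, ← Algebra.smul_def, Matrix.smul_mulVec,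
      pow_mulVec A μ v h, smul_smul]

lemma root_of_eig {n : Type*} [Fintype n] [DecidableEq n] (A : Matrix n n ℝ) (μ : ℝ)
    (v : n → ℝ) (hv : v ≠ 0) (h : A *ᵥ v = μ • v) : (minpoly ℝ A).eval μ = 0 := by
  have h0 := aeval_mulVec A μ v h (minpoly ℝ A)
  rw [minpoly.aeval, Matrix.zero_mulVec] at h0
  rcases smul_eq_zero.mp h0.symm with h | h
  · exact h
  · exact absurd h hv

lemma ev_zero (s t : ℕ) (ht : 2 ≤ t) :
    AH s t *ᵥ Sum.elim (0 : Fin s → ℝ) (Pi.single (⟨0, by omega⟩ : Fin t) 1 -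
      Pi.single (⟨1, by omega⟩ : Fin t) 1) = (0:ℝ) •
      Sum.elim (0 : Fin s → ℝ) (Pi.single (⟨0, by omega⟩ : Fin t) 1 -
        Pi.single (⟨1, by omega⟩ : Fin t) 1) := by
  funext x
  cases x <;>
    simp [AH, Matrix.mulVec, dotProduct, Jmat, Fintype.sum_sum_type,
      Matrix.fromBlocks, Finset.sum_sub_distrib, Finset.sum_pi_single,
      Matrix.sub_apply, Matrix.one_apply, Pi.single_apply]

lemma ev_negone (s t : ℕ) (hs : 2 ≤ s) :
    AH s t *ᵥ Sum.elim (Pi.single (⟨0, by omega⟩ : Fin s) 1 -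
      Pi.single (⟨1, by omega⟩ : Fin s) 1) (0 : Fin t → ℝ) = (-1:ℝ) •
      Sum.elim (Pi.single (⟨0, by omega⟩ : Fin s) 1 -
        Pi.single (⟨1, by omega⟩ : Fin s) 1) (0 : Fin t → ℝ) := by
  funext x
  cases x <;>
    simp [AH, Matrix.mulVec, dotProduct, Jmat, Fintype.sum_sum_type,
      Matrix.fromBlocks, Finset.sum_sub_distrib, Finset.sum_pi_single,
      Matrix.sub_apply, Matrix.one_apply, Pi.single_apply, sub_mul]

lemma ev_r (s t : ℕ) (r : ℝ) (hr : r ^ 2 = ((s:ℝ)-1) * r + (s:ℝ)*t) :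
    AH s t *ᵥ Sum.elim (fun _ => r) (fun _ => (s:ℝ)) =
      r • Sum.elim (fun _ => r) (fun _ => (s:ℝ)) := by
  funext x
  cases x <;>
    simp [AH, Matrix.mulVec, dotProduct, Jmat, Fintype.sum_sum_type,
      Matrix.fromBlocks, Matrix.sub_apply, Matrix.one_apply, Finset.sum_sub_distrib,
      Finset.sum_ite_eq, mul_sub, mul_ite, mul_one, mul_zero, mul_comm] <;> nlinarith [hr]

lemma Pmonic_aux (c d : ℝ) : (X * (X+1) * (X^2 - C c * X - C d) : ℝ[X]).Monic := by monicity!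

lemma Pdeg_aux (c d : ℝ) : (X * (X+1) * (X^2 - C c * X - C d) : ℝ[X]).natDegree = 4 := by
  compute_degree!

set_option maxHeartbeats 1000000 in
/-- `m(x) = x(x+1)(x² - (s-1)x - st)` is the minimal polynomial of `A(H)`. -/
theorem AH_minpoly (s t : ℕ) (hs : 2 ≤ s) (ht : 2 ≤ t) :
    minpoly ℝ (AH s t) =
      X * (X + 1) * (X ^ 2 - C ((s : ℝ) - 1) * X - C ((s : ℝ) * t)) := by
  have hs' : (2:ℝ) ≤ (s:ℝ) := by exact_mod_cast hs
  have ht' : (2:ℝ) ≤ (t:ℝ) := by exact_mod_cast ht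
  set P : ℝ[X] := X * (X + 1) * (X ^ 2 - C ((s : ℝ) - 1) * X - C ((s : ℝ) * t)) with hP
  have hPmonic : P.Monic := Pmonic_aux _ _
  have hPA : Polynomial.aeval (AH s t) P = 0 := by
    rw [hP]
    rw [_root_.map_mul, _root_.map_mul, map_sub, map_sub, _root_.map_add, _root_.map_pow,
      _root_.map_mul, aeval_X, aeval_C, aeval_C, _root_.map_one]
    rw [mul_assoc, ← Algebra.smul_def, Algebra.algebraMap_eq_smul_one]
    exact AH_annihilates s t
  have hint : IsIntegral ℝ (AH s t) := ⟨P, hPmonic, hPA⟩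
  have hmono : (minpoly ℝ (AH s t)).Monic := minpoly.monic hint
  have hne : minpoly ℝ (AH s t) ≠ 0 := hmono.ne_zero
  have hdvd : minpoly ℝ (AH s t) ∣ P := minpoly.dvd ℝ _ hPA
  -- roots of the quadratic factor
  set D : ℝ := ((s:ℝ)-1)^2 + 4*(s:ℝ)*(t:ℝ) with hD
  have hD0 : 0 < D := by nlinarith [sq_nonneg ((s:ℝ)-1)]
  have hsq : Real.sqrt D ^ 2 = D := Real.sq_sqrt hD0.le
  have hsqpos : 0 < Real.sqrt D := Real.sqrt_pos.mpr hD0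
  set r₁ : ℝ := (((s:ℝ)-1) + Real.sqrt D)/2 with hr₁def
  set r₂ : ℝ := (((s:ℝ)-1) - Real.sqrt D)/2 with hr₂def
  have hr₁ : r₁ ^ 2 = ((s:ℝ)-1) * r₁ + (s:ℝ)*t := by rw [hr₁def]; nlinarith [hsq]
  have hr₂ : r₂ ^ 2 = ((s:ℝ)-1) * r₂ + (s:ℝ)*t := by rw [hr₂def]; nlinarith [hsq]
  -- eigenvalue facts
  have i0t : (⟨0, by omega⟩ : Fin t) ≠ (⟨1, by omega⟩ : Fin t) := by
    simp [Fin.ext_iff]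
  have i0s : (⟨0, by omega⟩ : Fin s) ≠ (⟨1, by omega⟩ : Fin s) := by
    simp [Fin.ext_iff]
  have root0 : (minpoly ℝ (AH s t)).eval 0 = 0 := by
    refine root_of_eig _ _ _ (fun hv => ?_) (ev_zero s t ht)
    have := congrFun hv (Sum.inr (⟨0, by omega⟩ : Fin t))
    simp [Pi.single_apply, i0t] at this
  have rootm1 : (minpoly ℝ (AH s t)).eval (-1) = 0 := by
    refine root_of_eig _ _ _ (fun hv => ?_) (ev_negone s t hs)
    have := congrFun hv (Sum.inl (⟨0, by omega⟩ : Fin s))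
    simp [Pi.single_apply, i0s] at this
  have rootr : ∀ r : ℝ, r ^ 2 = ((s:ℝ)-1) * r + (s:ℝ)*t →
      (minpoly ℝ (AH s t)).eval r = 0 := by
    intro r hr
    refine root_of_eig _ _ _ (fun hv => ?_) (ev_r s t r hr)
    have := congrFun hv (Sum.inr (⟨0, by omega⟩ : Fin t))
    simp at this
    nlinarith
  have rootr₁ := rootr r₁ hr₁
  have rootr₂ := rootr r₂ hr₂
  -- distinctness
  have hr₁0 : r₁ ≠ 0 := fun h => by rw [h] at hr₁; nlinarith
  have hr₂0 : r₂ ≠ 0 := fun h => by rw [h] at hr₂; nlinarith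
  have hr₁m : r₁ ≠ -1 := fun h => by rw [h] at hr₁; nlinarith
  have hr₂m : r₂ ≠ -1 := fun h => by rw [h] at hr₂; nlinarith
  have hr₁₂ : r₁ ≠ r₂ := by
    rw [hr₁def, hr₂def]; intro h; nlinarith
  -- cardinality bound
  have hsub : ({0, -1, r₁, r₂} : Finset ℝ) ⊆ (minpoly ℝ (AH s t)).roots.toFinset := by
    intro x hx
    rw [Multiset.mem_toFinset, Polynomial.mem_roots hne]
    simp only [Finset.mem_insert, Finset.mem_singleton] at hx
    rcases hx with rfl | rfl | rfl | rfl
    · exact root0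
    · exact rootm1
    · exact rootr₁
    · exact rootr₂
  have hcard : ({0, -1, r₁, r₂} : Finset ℝ).card = 4 := by
    rw [Finset.card_insert_of_notMem (by simp [hr₁0.symm, hr₂0.symm]),
      Finset.card_insert_of_notMem (by simp [hr₁m.symm, hr₂m.symm]),
      Finset.card_insert_of_notMem (by simp [hr₁₂]), Finset.card_singleton]
  have h4 : 4 ≤ (minpoly ℝ (AH s t)).natDegree := by
    calc 4 = ({0, -1, r₁, r₂} : Finset ℝ).card := hcard.symm
    _ ≤ (minpoly ℝ (AH s t)).roots.toFinset.card := Finset.card_le_card hsub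
    _ ≤ Multiset.card (minpoly ℝ (AH s t)).roots := Multiset.toFinset_card_le _
    _ ≤ (minpoly ℝ (AH s t)).natDegree := Polynomial.card_roots' _
  have hP4 : P.natDegree = 4 := Pdeg_aux _ _
  obtain ⟨cpol, hc⟩ := hdvd
  have hcm : cpol.Monic := hmono.of_mul_monic_left (hc ▸ hPmonic)
  have hdeg : (minpoly ℝ (AH s t)).natDegree + cpol.natDegree = 4 := by
    rw [← hP4, hc, hmono.natDegree_mul hcm]
  have hc0 : cpol.natDegree = 0 := by omega
  rw [hcm.natDegree_eq_zero.mp hc0, mul_one] at hc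
  exact hc.symm
end

section
/- If μ is a real number that is not an eigenvalue of A(H) = [[J_{s×s} - I_s, J_{s×t}], [J_{t×s}, 0_{t×t}]], then m(μ)·(μI - A(H))^{-1} = [[αJ_{s×s} + βμ·I_s, δJ_{s×t}], [δJ_{t×s}, γJ_{t×t} + β(μ+1)I_t]], where m(x) = x(x+1)(x²-(s-1)x-st), α = μ² + μt, β = μ² - (s-1)μ - st, γ = sμ + s, and δ = μ² + μ. -/
open Matrix

lemma J_mul_J (a b c : ℕ) : Jmat a b * Jmat b c = (b : ℝ) • Jmat a c := by
  ext i j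
  simp [Matrix.mul_apply, Jmat]

lemma one_mul_J (a b : ℕ) : (1 : Matrix (Fin a) (Fin a) ℝ) * Jmat a b = Jmat a b :=
  Matrix.one_mul _

lemma J_mul_one (a b : ℕ) : Jmat a b * (1 : Matrix (Fin b) (Fin b) ℝ) = Jmat a b :=
  Matrix.mul_one _

/-- If `μ` is not an eigenvalue of `A(H)`, then
`m(μ)·(μI - A(H))⁻¹ = [[αJ + βμI, δJ], [δJ, γJ + β(μ+1)I]]`. -/
theorem AH_resolvent (s t : ℕ) (hs : 2 ≤ s) (ht : 2 ≤ t) (μ : ℝ)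
    (hμ : ¬ Module.End.HasEigenvalue (Matrix.toLin' (AH s t)) μ) :
    (μ * (μ + 1) * (μ ^ 2 - ((s : ℝ) - 1) * μ - s * t)) •
        (μ • (1 : Matrix (Fin s ⊕ Fin t) (Fin s ⊕ Fin t) ℝ) - AH s t)⁻¹ =
      Matrix.fromBlocks
        ((μ ^ 2 + μ * t) • Jmat s s + ((μ ^ 2 - ((s : ℝ) - 1) * μ - s * t) * μ) • 1)
        ((μ ^ 2 + μ) • Jmat s t)
        ((μ ^ 2 + μ) • Jmat t s)
        (((s : ℝ) * μ + s) • Jmat t t + ((μ ^ 2 - ((s : ℝ) - 1) * μ - s * t) * (μ + 1)) • 1) := by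
  set X := μ • (1 : Matrix (Fin s ⊕ Fin t) (Fin s ⊕ Fin t) ℝ) - AH s t with hXdef
  set m := μ * (μ + 1) * (μ ^ 2 - ((s : ℝ) - 1) * μ - s * t) with hmdef
  set B := Matrix.fromBlocks
        ((μ ^ 2 + μ * t) • Jmat s s + ((μ ^ 2 - ((s : ℝ) - 1) * μ - s * t) * μ) • 1)
        ((μ ^ 2 + μ) • Jmat s t)
        ((μ ^ 2 + μ) • Jmat t s)
        (((s : ℝ) * μ + s) • Jmat t t + ((μ ^ 2 - ((s : ℝ) - 1) * μ - s * t) * (μ + 1)) • 1)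
    with hBdef
  -- X is invertible since μ is not an eigenvalue
  have hdet : IsUnit X.det := by
    rw [isUnit_iff_ne_zero]
    intro h
    obtain ⟨v, hv0, hv⟩ := Matrix.exists_mulVec_eq_zero_iff.mpr h
    apply hμ
    apply Module.End.hasEigenvalue_of_hasEigenvector (x := v)
    refine ⟨?_, hv0⟩
    rw [Module.End.mem_eigenspace_iff]
    have : X *ᵥ v = μ • v - (AH s t) *ᵥ v := by
      rw [hXdef, Matrix.sub_mulVec, Matrix.smul_mulVec, Matrix.one_mulVec]
    rw [this] at hv
    have h2 : (AH s t) *ᵥ v = μ • v := (sub_eq_zero.mp hv).symm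
    simpa [Matrix.toLin'_apply] using h2
  -- key algebraic identity
  have key : X * B = m • 1 := by
    have h1 : (1 : Matrix (Fin s ⊕ Fin t) (Fin s ⊕ Fin t) ℝ) =
        Matrix.fromBlocks 1 0 0 1 := (Matrix.fromBlocks_one).symm
    rw [hXdef, hBdef, AH, h1, Matrix.fromBlocks_smul, sub_eq_add_neg, Matrix.fromBlocks_neg, Matrix.fromBlocks_add,
      Matrix.fromBlocks_multiply, Matrix.fromBlocks_smul, Matrix.fromBlocks_inj]
    refine ⟨?_, ?_, ?_, ?_⟩
    · simp only [Matrix.sub_mul, Matrix.add_mul, Matrix.mul_add, Matrix.smul_mul,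
        Matrix.mul_smul, J_mul_J, J_mul_one, one_mul_J, Matrix.one_mul, Matrix.mul_one,
        smul_smul, smul_zero, Matrix.zero_mul, Matrix.mul_zero, add_zero, zero_add,
        smul_sub, Matrix.neg_mul, Matrix.mul_neg, neg_smul, smul_neg, neg_neg, neg_zero, hmdef]
      match_scalars <;> push_cast <;> ring
    · simp only [Matrix.sub_mul, Matrix.add_mul, Matrix.mul_add, Matrix.smul_mul,
        Matrix.mul_smul, J_mul_J, J_mul_one, one_mul_J, Matrix.one_mul, Matrix.mul_one,
        smul_smul, smul_zero, Matrix.zero_mul, Matrix.mul_zero, add_zero, zero_add,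
        smul_sub, Matrix.neg_mul, Matrix.mul_neg, neg_smul, smul_neg, neg_neg, neg_zero, hmdef]
      match_scalars <;> push_cast <;> ring
    · simp only [Matrix.sub_mul, Matrix.add_mul, Matrix.mul_add, Matrix.smul_mul,
        Matrix.mul_smul, J_mul_J, J_mul_one, one_mul_J, Matrix.one_mul, Matrix.mul_one,
        smul_smul, smul_zero, Matrix.zero_mul, Matrix.mul_zero, add_zero, zero_add,
        smul_sub, Matrix.neg_mul, Matrix.mul_neg, neg_smul, smul_neg, neg_neg, neg_zero, hmdef]
      match_scalars <;> push_cast <;> ring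
    · simp only [Matrix.sub_mul, Matrix.add_mul, Matrix.mul_add, Matrix.smul_mul,
        Matrix.mul_smul, J_mul_J, J_mul_one, one_mul_J, Matrix.one_mul, Matrix.mul_one,
        smul_smul, smul_zero, Matrix.zero_mul, Matrix.mul_zero, add_zero, zero_add,
        smul_sub, Matrix.neg_mul, Matrix.mul_neg, neg_smul, smul_neg, neg_neg, neg_zero, hmdef]
      match_scalars <;> push_cast <;> ring
  calc m • X⁻¹ = X⁻¹ * (m • 1) := by rw [Matrix.mul_smul, Matrix.mul_one]
    _ = X⁻¹ * (X * B) := by rw [key]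
    _ = B := by rw [← Matrix.mul_assoc, Matrix.nonsing_inv_mul X hdet, Matrix.one_mul]
end

section
/- Let X be a star set for an eigenvalue μ of a graph G with adjacency matrix in block form A(G) = [[A_X, Bᵀ], [B, C]] (rows/columns of X first). Then X is a star set for μ if and only if μ is not an eigenvalue of C and μI - A_X = Bᵀ(μI - C)^{-1}B. -/
open Matrix

open scoped Classical

noncomputable section

variable {V : Type*} [Fintype V] [DecidableEq V]

/-- The real adjacency matrix of a graph. -/
def adjMat (G : SimpleGraph V) : Matrix V V ℝ :=
  letI := Classical.decRel G.Adj
  G.adjMatrix ℝ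

/-- `μ` is an (adjacency) eigenvalue of `G`. -/
def IsEigen (G : SimpleGraph V) (μ : ℝ) : Prop :=
  Module.End.HasEigenvalue (Matrix.toLin' (adjMat G)) μ

/-- The multiplicity of `μ` as an eigenvalue of `G`. -/
def eigMult (G : SimpleGraph V) (μ : ℝ) : ℕ :=
  Module.finrank ℝ (Module.End.eigenspace (Matrix.toLin' (adjMat G)) μ)

/-- `X` is a star set for `μ` in `G`: `|X|` equals the multiplicity of `μ` and `μ` is
not an eigenvalue of `G - X`. -/
def IsStarSet (G : SimpleGraph V) (μ : ℝ) (X : Finset V) : Prop :=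
  X.card = eigMult G μ ∧ ¬ IsEigen (G.induce ((↑X : Set V)ᶜ)) μ

/-- `μ` is a non-main eigenvalue: every `μ`-eigenvector is orthogonal to the
all-ones vector. -/
def IsNonMain (G : SimpleGraph V) (μ : ℝ) : Prop :=
  ∀ x : V → ℝ, (adjMat G).mulVec x = μ • x → x ⬝ᵥ (fun _ => 1) = 0

set_option linter.unusedSectionVars false

lemma adjMat_apply_aux (G : SimpleGraph V) (u v : V) :
    adjMat G u v = if G.Adj u v then 1 else 0 := by
  unfold adjMat
  rw [SimpleGraph.adjMatrix_apply]

lemma adjMat_symm_aux (G : SimpleGraph V) (u v : V) : adjMat G u v = adjMat G v u := by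
  rw [adjMat_apply_aux, adjMat_apply_aux]
  by_cases h : G.Adj u v
  · rw [if_pos h, if_pos h.symm]
  · rw [if_neg h, if_neg fun h' => h h'.symm]

/-- `μ` is not an eigenvalue of `M` iff `μI - M` is invertible. -/
lemma notEigen_iff_isUnit_aux {n : Type*} [Fintype n] [DecidableEq n]
    (M : Matrix n n ℝ) (μ : ℝ) :
    ¬ Module.End.HasEigenvalue (Matrix.toLin' M) μ ↔ IsUnit (μ • (1 : Matrix n n ℝ) - M) := by
  rw [← Matrix.mulVec_injective_iff_isUnit]
  rw [Module.End.hasEigenvalue_iff, not_not]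
  constructor
  · intro h u v huv
    have key : ∀ w : n → ℝ, (μ • (1 : Matrix n n ℝ) - M) *ᵥ w = 0 → w = 0 := by
      intro w hw
      have : w ∈ Module.End.eigenspace (Matrix.toLin' M) μ := by
        rw [Module.End.mem_eigenspace_iff, Matrix.toLin'_apply]
        rw [Matrix.sub_mulVec, Matrix.smul_mulVec, Matrix.one_mulVec, sub_eq_zero] at hw
        exact hw.symm
      rw [h] at this
      simpa using this
    have := key (u - v) (by rw [Matrix.mulVec_sub, huv, sub_self])
    exact sub_eq_zero.mp this
  · intro h
    rw [Submodule.eq_bot_iff]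
    intro v hv
    rw [Module.End.mem_eigenspace_iff, Matrix.toLin'_apply] at hv
    have h0 : (μ • (1 : Matrix n n ℝ) - M) *ᵥ v = (μ • (1 : Matrix n n ℝ) - M) *ᵥ 0 := by
      rw [Matrix.sub_mulVec, Matrix.smul_mulVec, Matrix.one_mulVec, hv, sub_self,
        Matrix.mulVec_zero]
    exact h h0

/-- Schur complement vanishing from an eigenspace of full first-block dimension. -/
lemma schur_aux {α β : Type*} [Fintype α] [Fintype β] [DecidableEq α] [DecidableEq β]
    (A' : Matrix (α ⊕ β) (α ⊕ β) ℝ) (μ : ℝ)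
    (AX : Matrix α α ℝ) (B : Matrix β α ℝ) (C : Matrix β β ℝ)
    (hA' : A' = Matrix.fromBlocks AX Bᵀ B C)
    (hD : IsUnit (μ • (1 : Matrix β β ℝ) - C))
    (hdim : Module.finrank ℝ (Module.End.eigenspace (Matrix.toLin' A') μ) = Fintype.card α) :
    μ • (1 : Matrix α α ℝ) - AX = Bᵀ * (μ • (1 : Matrix β β ℝ) - C)⁻¹ * B := by
  set D : Matrix β β ℝ := μ • (1 : Matrix β β ℝ) - C with hDdef
  set S : Matrix α α ℝ := (μ • (1 : Matrix α α ℝ) - AX) - Bᵀ * D⁻¹ * B with hSdef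
  have hDdet : IsUnit D.det := (Matrix.isUnit_iff_isUnit_det D).mp hD
  have hDD : D * D⁻¹ = 1 := Matrix.mul_nonsing_inv D hDdet
  have hD'D : D⁻¹ * D = 1 := Matrix.nonsing_inv_mul D hDdet
  set w : (α → ℝ) → (β → ℝ) := fun x => D⁻¹ *ᵥ (B *ᵥ x) with hw
  have hblock : ∀ (x : α → ℝ) (y : β → ℝ),
      A' *ᵥ Sum.elim x y = Sum.elim (AX *ᵥ x + Bᵀ *ᵥ y) (B *ᵥ x + C *ᵥ y) := by
    intro x y; rw [hA', Matrix.fromBlocks_mulVec]; rfl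
  have hsmul : ∀ (x : α → ℝ) (y : β → ℝ),
      μ • Sum.elim x y = Sum.elim (μ • x) (μ • y) := by
    intro x y; funext u; cases u <;> rfl
  have hDw : ∀ x : α → ℝ, D *ᵥ (w x) = B *ᵥ x := by
    intro x
    rw [hw]
    rw [Matrix.mulVec_mulVec, Matrix.mulVec_mulVec, hDD, Matrix.one_mul]
  have fwd : ∀ x : α → ℝ, S *ᵥ x = 0 →
      A' *ᵥ Sum.elim x (w x) = μ • Sum.elim x (w x) := by
    intro x hx
    have hBt : (Bᵀ * D⁻¹ * B) *ᵥ x = Bᵀ *ᵥ (w x) := by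
      show _ = Bᵀ *ᵥ (D⁻¹ *ᵥ (B *ᵥ x))
      rw [Matrix.mulVec_mulVec, Matrix.mulVec_mulVec]
    have h1 : AX *ᵥ x + Bᵀ *ᵥ (w x) = μ • x := by
      rw [hSdef, Matrix.sub_mulVec, Matrix.sub_mulVec, Matrix.smul_mulVec,
        Matrix.one_mulVec, hBt] at hx
      have h := sub_eq_zero.mp hx
      rw [sub_eq_iff_eq_add] at h
      rw [h]; abel
    have h2 : B *ᵥ x + C *ᵥ (w x) = μ • (w x) := by
      have h := hDw x
      rw [hDdef, Matrix.sub_mulVec, Matrix.smul_mulVec, Matrix.one_mulVec,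
        sub_eq_iff_eq_add] at h
      rw [← h]
    rw [hblock, hsmul, h1, h2]
  have bwd : ∀ z : (α ⊕ β) → ℝ, A' *ᵥ z = μ • z →
      (z ∘ Sum.inr = w (z ∘ Sum.inl)) ∧ S *ᵥ (z ∘ Sum.inl) = 0 := by
    intro z hz
    set x : α → ℝ := z ∘ Sum.inl with hx
    set y : β → ℝ := z ∘ Sum.inr with hy
    have hze : Sum.elim x y = z := by funext u; cases u <;> rfl
    rw [← hze, hblock, hsmul] at hz
    have h1 : AX *ᵥ x + Bᵀ *ᵥ y = μ • x := funext fun a => congrFun hz (Sum.inl a)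
    have h2 : B *ᵥ x + C *ᵥ y = μ • y := funext fun b => congrFun hz (Sum.inr b)
    have hDy : D *ᵥ y = B *ᵥ x := by
      rw [hDdef, Matrix.sub_mulVec, Matrix.smul_mulVec, Matrix.one_mulVec,
        sub_eq_iff_eq_add, ← h2]
    have hyw : y = w x := by
      show y = D⁻¹ *ᵥ (B *ᵥ x)
      rw [← hDy, Matrix.mulVec_mulVec, hD'D, Matrix.one_mulVec]
    refine ⟨hyw, ?_⟩
    have hBt : (Bᵀ * D⁻¹ * B) *ᵥ x = Bᵀ *ᵥ (w x) := by
      show _ = Bᵀ *ᵥ (D⁻¹ *ᵥ (B *ᵥ x))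
      rw [Matrix.mulVec_mulVec, Matrix.mulVec_mulVec]
    rw [hSdef, Matrix.sub_mulVec, Matrix.sub_mulVec, Matrix.smul_mulVec,
      Matrix.one_mulVec, hBt, ← hyw, ← h1]
    abel
  have hmemE : ∀ z : (α ⊕ β) → ℝ,
      z ∈ Module.End.eigenspace (Matrix.toLin' A') μ ↔ A' *ᵥ z = μ • z := by
    intro z; rw [Module.End.mem_eigenspace_iff, Matrix.toLin'_apply]
  have hmemK : ∀ x : α → ℝ, x ∈ LinearMap.ker (Matrix.toLin' S) ↔ S *ᵥ x = 0 := by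
    intro x; rw [LinearMap.mem_ker, Matrix.toLin'_apply]
  let E : Module.End.eigenspace (Matrix.toLin' A') μ ≃ₗ[ℝ] LinearMap.ker (Matrix.toLin' S) :=
  { toFun := fun z => ⟨(z : (α ⊕ β) → ℝ) ∘ Sum.inl,
      (hmemK _).mpr (bwd _ ((hmemE _).mp z.2)).2⟩
    map_add' := fun a b => rfl
    map_smul' := fun c a => rfl
    invFun := fun x => ⟨Sum.elim (x : α → ℝ) (w (x : α → ℝ)),
      (hmemE _).mpr (fwd _ ((hmemK _).mp x.2))⟩
    left_inv := fun z => by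
      apply Subtype.ext
      have := (bwd _ ((hmemE _).mp z.2)).1
      funext u
      cases u with
      | inl a => rfl
      | inr b => exact (congrFun this b).symm
    right_inv := fun x => Subtype.ext rfl }
  have hfr : Module.finrank ℝ (LinearMap.ker (Matrix.toLin' S)) = Fintype.card α := by
    rw [← E.finrank_eq, hdim]
  have hker : LinearMap.ker (Matrix.toLin' S) = ⊤ := by
    apply Submodule.eq_top_of_finrank_eq
    rw [hfr, Module.finrank_pi]
  have hS0 : S = 0 := by
    have h0 : Matrix.toLin' S = 0 := LinearMap.ker_eq_top.mp hker
    exact Matrix.toLin'.injective (by rw [h0, map_zero] :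
      Matrix.toLin' S = Matrix.toLin' (0 : Matrix α α ℝ))
  rw [hSdef] at hS0
  exact sub_eq_zero.mp hS0

/-- Transfer of (non-)eigenvalues from the induced subgraph to the block `C`. -/
lemma induce_notEigen_iff_aux {α β : Type*} [Fintype α] [Fintype β] [DecidableEq α]
    [DecidableEq β] (G : SimpleGraph (α ⊕ β)) (μ : ℝ)
    (X : Finset (α ⊕ β)) (hX : X = Finset.univ.map ⟨Sum.inl, Sum.inl_injective⟩)
    (C : Matrix β β ℝ) (hC : C = (adjMat G).submatrix Sum.inr Sum.inr) :
    ¬ IsEigen (G.induce ((↑X : Set (α ⊕ β))ᶜ)) μ ↔ IsUnit (μ • (1 : Matrix β β ℝ) - C) := by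
  set s : Set (α ⊕ β) := (↑X : Set (α ⊕ β))ᶜ with hs
  have hms : ∀ v : α ⊕ β, v ∈ s ↔ v.isRight := by
    intro v; cases v <;> simp [hs, hX]
  let e : β ≃ ↥s :=
  { toFun := fun b => ⟨Sum.inr b, (hms _).mpr rfl⟩
    invFun := fun i => (i.1).getRight ((hms _).mp i.2)
    left_inv := fun b => rfl
    right_inv := fun i => by
      apply Subtype.ext
      obtain ⟨v, hv⟩ := i
      cases v with
      | inl a => exact absurd ((hms _).mp hv) (by simp)
      | inr b => rfl }
  have hval : ∀ i : ↥s, Sum.inr (e.symm i) = (i : α ⊕ β) := fun i =>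
    congrArg Subtype.val (e.apply_symm_apply i)
  have hadj : adjMat (G.induce s) = C.submatrix (fun i => e.symm i) (fun i => e.symm i) := by
    ext i j
    rw [Matrix.submatrix_apply, hC, Matrix.submatrix_apply, hval, hval, adjMat_apply_aux,
      adjMat_apply_aux]
    congr 1
  rw [show (IsEigen (G.induce s) μ) = Module.End.HasEigenvalue
      (Matrix.toLin' (adjMat (G.induce s))) μ from rfl,
    notEigen_iff_isUnit_aux, hadj]
  have h1 : μ • (1 : Matrix ↥s ↥s ℝ) - C.submatrix (fun i => e.symm i) (fun i => e.symm i)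
      = (μ • (1 : Matrix β β ℝ) - C).submatrix e.symm e.symm := by
    ext i j
    simp [Matrix.sub_apply, Matrix.smul_apply, Matrix.submatrix_apply, Matrix.one_apply,
      EmbeddingLike.apply_eq_iff_eq]
  rw [h1, Matrix.isUnit_iff_isUnit_det, Matrix.det_submatrix_equiv_self,
    ← Matrix.isUnit_iff_isUnit_det]

/-- Theorem 5.1.7 (i): with the vertices of `X` listed first (here `X` is the set of
left-hand vertices of a graph on `α ⊕ β`, with block adjacency matrix
`[[A_X, Bᵀ],[B, C]]`), `X` is a star set for `μ` if and only if `μ` is not an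
eigenvalue of `C` and `μI - A_X = Bᵀ(μI - C)⁻¹B`. -/
theorem starSet_iff {α β : Type*} [Fintype α] [Fintype β] [DecidableEq α] [DecidableEq β]
    (G : SimpleGraph (α ⊕ β)) (μ : ℝ)
    (hμ : IsEigen G μ)
    (X : Finset (α ⊕ β)) (hX : X = Finset.univ.map ⟨Sum.inl, Sum.inl_injective⟩)
    (hcard : X.card = eigMult G μ)
    (AX : Matrix α α ℝ) (hAX : AX = (adjMat G).submatrix Sum.inl Sum.inl)
    (B : Matrix β α ℝ) (hB : B = (adjMat G).submatrix Sum.inr Sum.inl)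
    (C : Matrix β β ℝ) (hC : C = (adjMat G).submatrix Sum.inr Sum.inr) :
    IsStarSet G μ X ↔
      (¬ Module.End.HasEigenvalue (Matrix.toLin' C) μ ∧
        μ • (1 : Matrix α α ℝ) - AX = Bᵀ * (μ • (1 : Matrix β β ℝ) - C)⁻¹ * B) := by
  have hA' : adjMat G = Matrix.fromBlocks AX Bᵀ B C := by
    ext u v
    cases u with
    | inl a =>
      cases v with
      | inl a' => simp [Matrix.fromBlocks, hAX]
      | inr b =>
        simp only [Matrix.fromBlocks, Matrix.of_apply, Sum.elim_inl, Sum.elim_inr,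
          Matrix.transpose_apply, hB, Matrix.submatrix_apply]
        exact adjMat_symm_aux G (Sum.inl a) (Sum.inr b)
    | inr b =>
      cases v with
      | inl a => simp [Matrix.fromBlocks, hB]
      | inr b' => simp [Matrix.fromBlocks, hC]
  have hdim : Module.finrank ℝ (Module.End.eigenspace (Matrix.toLin' (adjMat G)) μ)
      = Fintype.card α := by
    have h1 : Fintype.card α = eigMult G μ := by
      rw [← hcard, hX, Finset.card_map, Finset.card_univ]
    exact h1.symm
  have hequiv := induce_notEigen_iff_aux G μ X hX C hC
  unfold IsStarSet
  constructor
  · intro h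
    have hu : IsUnit (μ • (1 : Matrix β β ℝ) - C) := hequiv.mp h.2
    exact ⟨(notEigen_iff_isUnit_aux C μ).mpr hu,
      schur_aux (adjMat G) μ AX B C hA' hu hdim⟩
  · intro h
    exact ⟨hcard, hequiv.mpr ((notEigen_iff_isUnit_aux C μ).mp h.1)⟩

end
end

section
/- Let X be a star set for eigenvalue μ in graph G with block adjacency matrix [[A_X, Bᵀ], [B, C]]. Then the eigenspace of μ in G consists exactly of the vectors (x, (μI - C)^{-1}Bx)ᵀ as x ranges over ℝ^{|X|}. -/
open Matrix

open scoped Classical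

noncomputable section

variable {V : Type*} [Fintype V] [DecidableEq V]

lemma adjMat_apply' {V : Type*} [Fintype V] [DecidableEq V] (G : SimpleGraph V) (i j : V) :
    adjMat G i j = if G.Adj i j then 1 else 0 := by
  by_cases h : G.Adj i j <;> simp [adjMat, h]

/-- Theorem 5.1.7 (ii): if `X` (the left-hand vertices) is a star set for `μ`, then the
eigenspace of `μ` consists exactly of the vectors `(x, (μI - C)⁻¹Bx)ᵀ`, `x ∈ ℝ^X`. -/
theorem eigenspace_of_starSet {α β : Type*} [Fintype α] [Fintype β] [DecidableEq α]
    [DecidableEq β] (G : SimpleGraph (α ⊕ β)) (μ : ℝ)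
    (X : Finset (α ⊕ β)) (hX : X = Finset.univ.map ⟨Sum.inl, Sum.inl_injective⟩)
    (hstar : IsStarSet G μ X)
    (B : Matrix β α ℝ) (hB : B = (adjMat G).submatrix Sum.inr Sum.inl)
    (C : Matrix β β ℝ) (hC : C = (adjMat G).submatrix Sum.inr Sum.inr) :
    ∀ v : (α ⊕ β) → ℝ,
      (adjMat G).mulVec v = μ • v ↔
        ∃ x : α → ℝ, v = Sum.elim x ((μ • (1 : Matrix β β ℝ) - C)⁻¹ *ᵥ (B *ᵥ x)) := by
  set A := adjMat G with hA
  set M : Matrix β β ℝ := μ • (1 : Matrix β β ℝ) - C with hM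
  set s : Set (α ⊕ β) := ((↑X : Set (α ⊕ β))ᶜ) with hs
  have hXmem : ∀ z : α ⊕ β, z ∈ X ↔ ∃ a, z = Sum.inl a := by
    subst hX; intro z; simp [eq_comm]
  have hsmem : ∀ z, z ∈ s ↔ ∃ b, z = Sum.inr b := by
    intro z
    cases z with
    | inl a => simp [hs, hXmem]
    | inr b => simp [hs, hXmem]
  have he : ∀ b : β, Sum.inr b ∈ s := fun b => (hsmem _).2 ⟨b, rfl⟩
  set e : β → ↥s := fun b => ⟨Sum.inr b, he b⟩ with hee
  have hebij : Function.Bijective e := by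
    constructor
    · intro b b' h
      simpa [hee] using congrArg Subtype.val h
    · rintro ⟨z, hz⟩
      obtain ⟨b, rfl⟩ := (hsmem z).1 hz
      exact ⟨b, rfl⟩
  have hentry : ∀ b b' : β, adjMat (G.induce s) (e b) (e b') = C b b' := by
    intro b b'
    rw [adjMat_apply', hC, Matrix.submatrix_apply, hA, adjMat_apply']
    by_cases h : G.Adj (Sum.inr b) (Sum.inr b') <;> simp [h, hee]
  -- μ is not an eigenvalue of C
  have hker : ∀ y : β → ℝ, C *ᵥ y = μ • y → y = 0 := by
    intro y hy
    by_contra hy0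
    apply hstar.2
    set y' : ↥s → ℝ := fun z => Sum.elim 0 y z.val with hy'
    refine Module.End.hasEigenvalue_of_hasEigenvector (x := y')
      ⟨Module.End.mem_eigenspace_iff.2 ?_, ?_⟩
    · rw [Matrix.toLin'_apply]
      funext z
      obtain ⟨b, hb⟩ := (hsmem z.val).1 z.2
      have hz : z = e b := Subtype.ext hb
      subst hz
      have : (adjMat (G.induce s) *ᵥ y') (e b) = (C *ᵥ y) b := by
        rw [Matrix.mulVec, dotProduct, Matrix.mulVec, dotProduct]
        refine (Fintype.sum_bijective e hebij _ _ ?_).symm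
        intro b'
        rw [hentry]
        simp [hy', hee]
      rw [this, hy]
      simp [hy', hee]
    · intro h
      obtain ⟨b, hb⟩ := Function.ne_iff.1 hy0
      exact hb (by simpa [hy', hee] using congrFun h (e b))
  -- M is invertible
  have hdet : M.det ≠ 0 := by
    intro h
    obtain ⟨y, hy0, hy⟩ := Matrix.exists_mulVec_eq_zero_iff.2 h
    apply hy0
    apply hker
    have h2 : μ • y - C *ᵥ y = 0 := by
      simpa [hM, Matrix.sub_mulVec, Matrix.smul_mulVec, Matrix.one_mulVec] using hy
    rw [← sub_eq_zero, ← neg_sub, h2, neg_zero]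
  have hMinv : ∀ w : β → ℝ, M⁻¹ *ᵥ (M *ᵥ w) = w := by
    intro w
    rw [Matrix.mulVec_mulVec, Matrix.nonsing_inv_mul M (Ne.isUnit hdet), Matrix.one_mulVec]
  -- block decomposition of the eigen-equation
  have hblock : ∀ (v : (α ⊕ β) → ℝ) (b : β),
      (A *ᵥ v) (Sum.inr b) = (B *ᵥ (v ∘ Sum.inl)) b + (C *ᵥ (v ∘ Sum.inr)) b := by
    intro v b
    simp only [Matrix.mulVec, dotProduct, hB, hC, Matrix.submatrix_apply,
      Function.comp]
    exact Fintype.sum_sum_type _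
  -- forward direction
  have hfwd : ∀ v : (α ⊕ β) → ℝ, A *ᵥ v = μ • v →
      v = Sum.elim (v ∘ Sum.inl) (M⁻¹ *ᵥ (B *ᵥ (v ∘ Sum.inl))) := by
    intro v hv
    have hy : M *ᵥ (v ∘ Sum.inr) = B *ᵥ (v ∘ Sum.inl) := by
      funext b
      have h1 := congrFun hv (Sum.inr b)
      rw [hblock] at h1
      have : (M *ᵥ (v ∘ Sum.inr)) b = μ • (v (Sum.inr b)) - (C *ᵥ (v ∘ Sum.inr)) b := by
        simp [hM, Matrix.sub_mulVec, Matrix.smul_mulVec, Matrix.one_mulVec]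
      rw [this]
      have h2 : (μ • v) (Sum.inr b) = μ • v (Sum.inr b) := rfl
      rw [h2] at h1
      rw [← h1]
      ring
    have : v ∘ Sum.inr = M⁻¹ *ᵥ (B *ᵥ (v ∘ Sum.inl)) := by
      rw [← hy, hMinv]
    funext z
    cases z with
    | inl a => simp
    | inr b => simpa using congrFun this b
  -- dimension count: the projection onto the α-coordinates is surjective
  set E := Module.End.eigenspace (Matrix.toLin' A) μ with hE
  set π : E →ₗ[ℝ] (α → ℝ) := (LinearMap.funLeft ℝ ℝ Sum.inl).comp E.subtype with hπ
  have hmem_eig : ∀ v : E, A *ᵥ (v : (α ⊕ β) → ℝ) = μ • (v : (α ⊕ β) → ℝ) := by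
    intro v
    have := Module.End.mem_eigenspace_iff.1 v.2
    rwa [Matrix.toLin'_apply] at this
  have hπinj : Function.Injective π := by
    rw [← LinearMap.ker_eq_bot, LinearMap.ker_eq_bot']
    intro v hv
    have hx0 : (v : (α ⊕ β) → ℝ) ∘ Sum.inl = 0 := by
      funext a; exact congrFun hv a
    apply Subtype.ext
    have := hfwd v (hmem_eig v)
    rw [hx0] at this
    rw [this]
    funext z
    cases z <;> simp
  have hcard : X.card = Fintype.card α := by subst hX; simp
  have hfr : Module.finrank ℝ E = Fintype.card α := by
    have h1 : Module.finrank ℝ E = eigMult G μ := rfl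
    rw [h1, ← hstar.1, hcard]
  have hπsurj : Function.Surjective π := by
    rw [← LinearMap.range_eq_top]
    apply Submodule.eq_top_of_finrank_eq
    rw [LinearMap.finrank_range_of_inj hπinj, hfr, Module.finrank_fintype_fun_eq_card]
  intro v
  constructor
  · intro hv
    exact ⟨v ∘ Sum.inl, hfwd v hv⟩
  · rintro ⟨x, rfl⟩
    obtain ⟨w, hw⟩ := hπsurj x
    have hw1 : (w : (α ⊕ β) → ℝ) ∘ Sum.inl = x := by
      funext a; exact congrFun hw a
    have hweq := hfwd w (hmem_eig w)
    rw [hw1] at hweq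
    rw [← hweq]
    exact hmem_eig w

end
end

section
/- Let X be a star set for eigenvalue μ in a graph G with star complement H = G - X. If μ ≠ 0, then N_H(u) is non-empty for every u ∈ X. If moreover μ ∉ {-1, 0}, then the neighborhoods N_H(u), u ∈ X, are non-empty and pairwise distinct. -/
open Matrix

open scoped Classical

noncomputable section

variable {V : Type*} [Fintype V] [DecidableEq V]

lemma sum_split_compl (X : Finset V) (f : V → ℝ) :
    ∑ w, f w = ∑ w ∈ X, f w + ∑ w : ((↑X : Set V)ᶜ : Set V), f w := by
  rw [← Finset.sum_add_sum_compl X f]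
  congr 1
  rw [Finset.sum_set_coe]
  congr 1
  ext a
  simp

lemma eig_vanish (G : SimpleGraph V) (μ : ℝ) (X : Finset V)
    (hH : ¬ IsEigen (G.induce ((↑X : Set V)ᶜ)) μ)
    (z : V → ℝ) (hz : (adjMat G).mulVec z = μ • z)
    (hrow : ∀ a : V, a ∉ X → ∑ w ∈ X, (if G.Adj a w then (1:ℝ) else 0) * z w = 0) :
    ∀ a : V, a ∉ X → z a = 0 := by
  set s : Set V := ((↑X : Set V)ᶜ) with hs
  set y : ↥s → ℝ := fun a => z a with hy
  have hmem : ∀ a : V, a ∈ s ↔ a ∉ X := by intro a; simp [hs]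
  have key : (adjMat (G.induce s)).mulVec y = μ • y := by
    funext a
    have ha : (a : V) ∉ X := (hmem a).1 a.2
    have hza := congrFun hz (a : V)
    have hsum : ∑ w, (if G.Adj (a : V) w then (1:ℝ) else 0) * z w = μ * z a := by
      simpa [adjMat, Matrix.mulVec, dotProduct, SimpleGraph.adjMatrix] using hza
    rw [sum_split_compl X, hrow a ha, zero_add] at hsum
    have : (adjMat (G.induce s)).mulVec y a
        = ∑ w : ↥s, (if G.Adj (a : V) (w : V) then (1:ℝ) else 0) * z w := by
      simp [adjMat, Matrix.mulVec, dotProduct, SimpleGraph.adjMatrix, hy]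
    rw [this, hsum]
    simp [hy]
  have hy0 : y = 0 := by
    by_contra hne
    exact hH (Module.End.hasEigenvalue_of_hasEigenvector
      ⟨Module.End.mem_eigenspace_iff.2 (by rw [Matrix.toLin'_apply]; exact key), hne⟩)
  intro a ha
  have : y ⟨a, (hmem a).2 ha⟩ = 0 := by rw [hy0]; rfl
  simpa [hy] using this

lemma exists_eigvec (G : SimpleGraph V) (μ : ℝ) (X : Finset V) (hstar : IsStarSet G μ X)
    (x : ↥X → ℝ) :
    ∃ z : V → ℝ, (adjMat G).mulVec z = μ • z ∧ ∀ i : ↥X, z i = x i := by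
  set S := Module.End.eigenspace (Matrix.toLin' (adjMat G)) μ with hS
  let r : S →ₗ[ℝ] (↥X → ℝ) :=
    { toFun := fun z i => z.1 i
      map_add' := fun a b => rfl
      map_smul' := fun c a => rfl }
  have hmul : ∀ z : S, (adjMat G).mulVec z.1 = μ • z.1 := by
    intro z
    have := Module.End.mem_eigenspace_iff.1 z.2
    rwa [Matrix.toLin'_apply] at this
  have hinj : Function.Injective r := by
    rw [injective_iff_map_eq_zero]
    intro z hz0
    have hX : ∀ i ∈ X, z.1 i = 0 := by
      intro i hi
      exact congrFun hz0 ⟨i, hi⟩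
    have hvan := eig_vanish G μ X hstar.2 z.1 (hmul z)
      (by
        intro a _
        refine Finset.sum_eq_zero fun w hw => ?_
        rw [hX w hw, mul_zero])
    ext i
    by_cases hi : i ∈ X
    · exact hX i hi
    · exact hvan i hi
  have hfr : Module.finrank ℝ S = Module.finrank ℝ (↥X → ℝ) := by
    rw [Module.finrank_pi, Fintype.card_coe]
    exact hstar.1.symm
  have hsurj : Function.Surjective r :=
    (LinearMap.injective_iff_surjective_of_finrank_eq_finrank hfr).1 hinj
  obtain ⟨z, hz⟩ := hsurj x
  exact ⟨z.1, hmul z, fun i => congrFun hz i⟩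

/-- Lemma 2.2: if `X` is a star set for `μ ≠ 0`, the `H`-neighborhoods `N_H(u)`
(`u ∈ X`, `H = G - X`) are non-empty; if moreover `μ ∉ {-1, 0}` they are non-empty
and pairwise distinct. -/
theorem starSet_neighborhoods (G : SimpleGraph V) (μ : ℝ) (hμeig : IsEigen G μ)
    (X : Finset V) (hstar : IsStarSet G μ X)
    (NH : V → Set V) (hNH : ∀ u, NH u = {v | v ∉ X ∧ G.Adj u v}) :
    (μ ≠ 0 → ∀ u ∈ X, (NH u).Nonempty) ∧
    (μ ≠ 0 → μ ≠ -1 →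
      (∀ u ∈ X, (NH u).Nonempty) ∧ ∀ u ∈ X, ∀ v ∈ X, u ≠ v → NH u ≠ NH v) := by
  have part1 : μ ≠ 0 → ∀ u ∈ X, (NH u).Nonempty := by
    intro hμ0 u hu
    by_contra hne
    rw [Set.not_nonempty_iff_eq_empty] at hne
    have hadj : ∀ w, G.Adj u w → w ∈ X := by
      intro w hw
      by_contra hwX
      have : w ∈ NH u := by rw [hNH]; exact ⟨hwX, hw⟩
      rw [hne] at this
      exact this
    obtain ⟨z, hz, hzX⟩ := exists_eigvec G μ X hstar (Pi.single ⟨u, hu⟩ 1)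
    have hzu : z u = 1 := by
      have := hzX ⟨u, hu⟩
      rwa [Pi.single_eq_same] at this
    have hsum : ∑ w, (if G.Adj u w then (1:ℝ) else 0) * z w = μ * z u := by
      simpa [adjMat, Matrix.mulVec, dotProduct, SimpleGraph.adjMatrix]
        using congrFun hz u
    have hzero : ∑ w, (if G.Adj u w then (1:ℝ) else 0) * z w = 0 := by
      refine Finset.sum_eq_zero fun w _ => ?_
      by_cases haw : G.Adj u w
      · have hwX : w ∈ X := hadj w haw
        have hwu : w ≠ u := fun h => G.irrefl (h ▸ haw)
        have : z w = 0 := by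
          have := hzX ⟨w, hwX⟩
          rwa [Pi.single_eq_of_ne (by simpa using hwu)] at this
        rw [this, mul_zero]
      · simp [haw]
    rw [hzero, hzu, mul_one] at hsum
    exact hμ0 hsum.symm
  refine ⟨part1, fun hμ0 hμ1 => ⟨part1 hμ0, ?_⟩⟩
  intro u hu v hv huv hEq
  set x : ↥X → ℝ := fun i => if (i : V) = u then 1 else if (i : V) = v then -1 else 0
    with hx
  obtain ⟨z, hz, hzX⟩ := exists_eigvec G μ X hstar x
  have hzu : z u = 1 := by
    have := hzX ⟨u, hu⟩; rw [this, hx]; simp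
  have hzv : z v = -1 := by
    have := hzX ⟨v, hv⟩; rw [this, hx]; simp [huv.symm]
  have hz0 : ∀ w ∈ X, w ≠ u → w ≠ v → z w = 0 := by
    intro w hw hwu hwv
    have := hzX ⟨w, hw⟩; rw [this, hx]; simp [hwu, hwv]
  have hsumX : ∀ a : V, ∑ w ∈ X, (if G.Adj a w then (1:ℝ) else 0) * z w
      = (if G.Adj a u then (1:ℝ) else 0) - (if G.Adj a v then (1:ℝ) else 0) := by
    intro a
    rw [Finset.sum_eq_add_of_mem u v hu hv huv
      (fun w hw hwuv => by rw [hz0 w hw hwuv.1 hwuv.2, mul_zero])]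
    rw [hzu, hzv]
    ring
  have hAdj : ∀ a, a ∉ X → (G.Adj a u ↔ G.Adj a v) := by
    intro a ha
    have h2 : a ∈ NH u ↔ a ∈ NH v := by rw [hEq]
    rw [hNH, hNH] at h2
    simp only [Set.mem_setOf_eq] at h2
    constructor
    · intro h; exact ((h2.1 ⟨ha, h.symm⟩).2).symm
    · intro h; exact ((h2.2 ⟨ha, h.symm⟩).2).symm
  have hvan := eig_vanish G μ X hstar.2 z hz (by
    intro a ha
    rw [hsumX a]
    by_cases h : G.Adj a u
    · rw [if_pos h, if_pos ((hAdj a ha).1 h), sub_self]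
    · rw [if_neg h, if_neg fun h' => h ((hAdj a ha).2 h'), sub_self])
  have hsum : ∑ w, (if G.Adj u w then (1:ℝ) else 0) * z w = μ * z u := by
    simpa [adjMat, Matrix.mulVec, dotProduct, SimpleGraph.adjMatrix]
      using congrFun hz u
  rw [sum_split_compl X, hsumX u] at hsum
  have hcompl : ∑ w : (((↑X : Set V)ᶜ : Set V)),
      (if G.Adj u (w : V) then (1:ℝ) else 0) * z w = 0 := by
    refine Finset.sum_eq_zero fun w _ => ?_
    rw [hvan w (fun h => w.2 (Finset.mem_coe.2 h)), mul_zero]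
  rw [hcompl, add_zero, hzu, mul_one, if_neg (G.irrefl)] at hsum
  by_cases h : G.Adj u v
  · rw [if_pos h] at hsum
    exact hμ1 (by linarith)
  · rw [if_neg h] at hsum
    exact hμ0 (by linarith)

end
end

section
/- If X is a star set for eigenvalue μ in a graph G and U is a proper subset of X, then X \ U is a star set for μ in the graph G \ U (the induced subgraph on V(G) \ U). -/
open Matrix

open scoped Classical

noncomputable section

variable {V : Type*} [Fintype V] [DecidableEq V]

/-!
Deleting a set `S` of vertices lowers the multiplicity of an eigenvalue by at most `|S|`: the
eigenvectors vanishing on `S` form a subspace of codimension at most `|S|` in the eigenspace, and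
they restrict injectively to eigenvectors of the remaining graph. Apply this to `U` in `G`, and to
`X \ U` in `G \ U`; since deleting `X \ U` from `G \ U` leaves `G - X`, where `μ` has
multiplicity `0`, the multiplicity of `μ` in `G \ U` is squeezed between `|X| - |U|` and `|X \ U|`.
-/

open Module.End

namespace Matrix

variable {K W : Type*} [Field K] [Fintype W] [DecidableEq W]

theorem hasEigenvalue_toLin'_submatrix_equiv {Z : Type*} [Fintype Z] [DecidableEq Z]
    (A : Matrix W W K) (e : Z ≃ W) (μ : K) :
    HasEigenvalue (toLin' (A.submatrix e e)) μ ↔ HasEigenvalue (toLin' A) μ := by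
  rw [hasEigenvalue_iff_isRoot_charpoly, hasEigenvalue_iff_isRoot_charpoly,
    charpoly_toLin', charpoly_toLin', ← charpoly_reindex e.symm A, reindex_apply, Equiv.symm_symm]

theorem submatrix_mulVec_comp_val_of_eq_zero (A : Matrix W W K) (S : Finset W) (x : W → K)
    (hx : ∀ i ∈ S, x i = 0) :
    A.submatrix (Subtype.val : ((↑S : Set W)ᶜ : Set W) → W) Subtype.val *ᵥ
        (x ∘ (Subtype.val : ((↑S : Set W)ᶜ : Set W) → W)) = (A *ᵥ x) ∘ Subtype.val := by
  funext i
  simp only [mulVec, dotProduct, submatrix_apply, Function.comp_apply]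
  rw [← Finset.sum_subtype Sᶜ (p := (· ∈ (↑S : Set W)ᶜ)) (by simp) (fun j => A i j * x j)]
  exact Finset.sum_subset (Finset.subset_univ _) fun j _ hj => by
    simp [hx j (by simpa using hj)]

theorem finrank_eigenspace_le_finrank_eigenspace_submatrix_add_card (A : Matrix W W K)
    (S : Finset W) (μ : K) :
    Module.finrank K (eigenspace (toLin' A) μ) ≤
      Module.finrank K (eigenspace
        (toLin' (A.submatrix (Subtype.val : ((↑S : Set W)ᶜ : Set W) → W) Subtype.val)) μ)
        + S.card := by
  set E := eigenspace (toLin' A) μ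
  let φ : E →ₗ[K] (S → K) := LinearMap.funLeft K K Subtype.val ∘ₗ E.subtype
  let ψ : LinearMap.ker φ →ₗ[K] (((↑S : Set W)ᶜ : Set W) → K) :=
    LinearMap.funLeft K K Subtype.val ∘ₗ E.subtype ∘ₗ (LinearMap.ker φ).subtype
  have vanish (x : LinearMap.ker φ) : ∀ i ∈ S, (x : W → K) i = 0 := fun i hi =>
    congrFun (LinearMap.mem_ker.mp x.2) ⟨i, hi⟩
  have hφ_range : Module.finrank K (LinearMap.range φ) ≤ S.card := by
    simpa using (LinearMap.range φ).finrank_le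
  have hψ_inj : Function.Injective ψ := fun x y hxy => by
    ext i
    by_cases hi : i ∈ S
    · rw [vanish x i hi, vanish y i hi]
    · exact congrFun hxy ⟨i, by simpa using hi⟩
  have hψ_range : LinearMap.range ψ ≤ eigenspace
      (toLin' (A.submatrix (Subtype.val : ((↑S : Set W)ᶜ : Set W) → W) Subtype.val)) μ := by
    rintro _ ⟨x, rfl⟩
    have hx : A *ᵥ (x : W → K) = μ • (x : W → K) := by
      simpa using mem_eigenspace_iff.mp (x : E).2
    rw [mem_eigenspace_iff, toLin'_apply]
    change _ *ᵥ ((x : W → K) ∘ _) = μ • ((x : W → K) ∘ _)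
    rw [submatrix_mulVec_comp_val_of_eq_zero A S _ (vanish x), hx]
    rfl
  calc Module.finrank K E
      = Module.finrank K (LinearMap.range φ) + Module.finrank K (LinearMap.ker φ) :=
        (LinearMap.finrank_range_add_finrank_ker φ).symm
    _ = Module.finrank K (LinearMap.range φ) + Module.finrank K (LinearMap.range ψ) := by
        rw [LinearMap.finrank_range_of_inj hψ_inj]
    _ ≤ _ := by grw [hφ_range, Submodule.finrank_mono hψ_range, add_comm]

end Matrix

variable {α β W : Type*} [Fintype W] [DecidableEq W]

theorem adjMat_induce (G : SimpleGraph α) (s : Set α) :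
    adjMat (G.induce s) = (adjMat G).submatrix Subtype.val Subtype.val := by
  ext a b
  simp [adjMat, SimpleGraph.adjMatrix_apply]

theorem adjMat_eq_submatrix_of_iso {G : SimpleGraph α} {H : SimpleGraph β} (e : G ≃g H) :
    adjMat G = (adjMat H).submatrix e e := by
  ext a b
  simp [adjMat, SimpleGraph.adjMatrix_apply, e.map_adj_iff]

theorem isEigen_congr {G : SimpleGraph V} {H : SimpleGraph W} (e : G ≃g H) (μ : ℝ) :
    IsEigen G μ ↔ IsEigen H μ := by
  rw [IsEigen, adjMat_eq_submatrix_of_iso e]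
  exact Matrix.hasEigenvalue_toLin'_submatrix_equiv _ e.toEquiv μ

theorem eigMult_eq_zero_iff (G : SimpleGraph V) (μ : ℝ) : eigMult G μ = 0 ↔ ¬ IsEigen G μ := by
  rw [eigMult, IsEigen, hasEigenvalue_iff, not_not, Submodule.finrank_eq_zero]

theorem eigMult_le_eigMult_induce_compl_add_card (G : SimpleGraph V) (S : Finset V) (μ : ℝ) :
    eigMult G μ ≤ eigMult (G.induce (↑S : Set V)ᶜ) μ + S.card := by
  rw [eigMult, eigMult, adjMat_induce]
  exact Matrix.finrank_eigenspace_le_finrank_eigenspace_submatrix_add_card _ S μ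

def SimpleGraph.induceInduceIso (G : SimpleGraph α) {s : Set α} {t : Set s} {r : Set α}
    (h : Subtype.val '' t = r) : (G.induce s).induce t ≃g G.induce r where
  toEquiv := (Equiv.Set.image Subtype.val t Subtype.val_injective).trans (Equiv.setCongr h)
  map_rel_iff' := Iff.rfl

theorem card_filter_val_mem_sdiff (U X : Finset V) :
    (Finset.univ.filter (fun v : ((↑U : Set V)ᶜ : Set V) => ↑v ∈ X \ U)).card = (X \ U).card := by
  rw [← Finset.card_map (Function.Embedding.subtype _)]
  congr 1
  ext v
  simp +contextual [Finset.mem_sdiff]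

theorem image_val_compl_filter_val_mem_sdiff {U X : Finset V} (hUX : U ⊆ X) :
    Subtype.val '' (↑(Finset.univ.filter
      (fun v : ((↑U : Set V)ᶜ : Set V) => ↑v ∈ X \ U)) : Set ((↑U : Set V)ᶜ : Set V))ᶜ =
      (↑X : Set V)ᶜ := by
  ext v
  simp only [Set.mem_image, Set.mem_compl_iff, Finset.coe_filter, Finset.mem_univ, true_and,
    Set.mem_ofPred_eq, Finset.mem_sdiff, Subtype.exists, Finset.mem_coe, exists_and_right,
    exists_eq_right, exists_prop]
  have := @hUX v
  tauto

theorem starSet_of_delete_general (G : SimpleGraph V) (μ : ℝ)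
    (X : Finset V) (hstar : IsStarSet G μ X) (U : Finset V) (hU : U ⊂ X) :
    IsStarSet (G.induce ((↑U : Set V)ᶜ)) μ
      (Finset.univ.filter (fun v : ((↑U : Set V)ᶜ : Set V) => ↑v ∈ X \ U)) := by
  set T := Finset.univ.filter (fun v : ((↑U : Set V)ᶜ : Set V) => ↑v ∈ X \ U)
  have hGX : ¬ IsEigen ((G.induce (↑U : Set V)ᶜ).induce (↑T : Set _)ᶜ) μ := by
    rw [isEigen_congr (G.induceInduceIso (image_val_compl_filter_val_mem_sdiff hU.subset))]
    exact hstar.2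
  have hlow := eigMult_le_eigMult_induce_compl_add_card G U μ
  have hhigh := eigMult_le_eigMult_induce_compl_add_card (G.induce (↑U : Set V)ᶜ) T μ
  rw [(eigMult_eq_zero_iff _ μ).mpr hGX] at hhigh
  have hT : T.card + U.card = X.card := by
    rw [card_filter_val_mem_sdiff, Finset.card_sdiff_add_card_eq_card hU.subset]
  exact ⟨by have := hstar.1; omega, hGX⟩

/-- Lemma 2.3: if `X` is a star set for `μ` in `G` and `U ⊊ X`, then `X \ U` is a star
set for `μ` in `G \ U` (the induced subgraph on `V(G) \ U`). -/
theorem starSet_of_delete (G : SimpleGraph V) (μ : ℝ) (hμeig : IsEigen G μ)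
    (X : Finset V) (hstar : IsStarSet G μ X) (U : Finset V) (hU : U ⊂ X) :
    IsStarSet (G.induce ((↑U : Set V)ᶜ)) μ
      (Finset.univ.filter (fun v : ((↑U : Set V)ᶜ : Set V) => ↑v ∈ X \ U)) :=
  starSet_of_delete_general G μ X hstar U hU
end
end

section
/- If X is a star set in graph G for a non-main eigenvalue μ (the eigenspace of μ is orthogonal to the all-ones vector), then ⟨b_u, j⟩ := b_uᵀ(μI - A(H))^{-1} j = -1 for every u ∈ X, where H = G - X, b_u is the indicator vector of N_H(u), and j is the all-ones vector. -/
open Matrix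

open scoped Classical

noncomputable section

variable {V : Type*} [Fintype V] [DecidableEq V]

/-- Proposition 5.2.4: if `X` (the left-hand vertices) is a star set for a non-main
eigenvalue `μ`, then `⟨b_u, j⟩ = b_uᵀ(μI - A(H))⁻¹ j = -1` for every `u ∈ X`. -/
theorem nonMain_inner_j {α β : Type*} [Fintype α] [Fintype β] [DecidableEq α]
    [DecidableEq β] (G : SimpleGraph (α ⊕ β)) (μ : ℝ)
    (hμ : IsEigen G μ) (hnm : IsNonMain G μ)
    (X : Finset (α ⊕ β)) (hX : X = Finset.univ.map ⟨Sum.inl, Sum.inl_injective⟩)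
    (hstar : IsStarSet G μ X)
    (C : Matrix β β ℝ) (hC : C = (adjMat G).submatrix Sum.inr Sum.inr)
    (b : α → β → ℝ) (hb : ∀ u j, b u j = if G.Adj (Sum.inl u) (Sum.inr j) then 1 else 0) :
    ∀ u : α, b u ⬝ᵥ ((μ • (1 : Matrix β β ℝ) - C)⁻¹ *ᵥ (fun _ => 1)) = -1 := by
  classical
  intro u
  set A := adjMat G with hA
  have hAap : ∀ s t, A s t = if G.Adj s t then 1 else 0 := by
    intro s t; simp [hA, adjMat]
  have hAsym : ∀ s t, A s t = A t s := by
    intro s t; rw [hAap, hAap]; simp only [SimpleGraph.adj_comm]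
  have hCap : ∀ j k, C j k = A (Sum.inr j) (Sum.inr k) := by
    intro j k; rw [hC]; rfl
  set M : Matrix β β ℝ := μ • (1 : Matrix β β ℝ) - C with hMdef
  have hMmul : ∀ y : β → ℝ, M *ᵥ y = μ • y - C *ᵥ y := by
    intro y
    rw [hMdef, Matrix.sub_mulVec, Matrix.smul_mulVec, Matrix.one_mulVec]
  have hmemXc : ∀ j : β, (Sum.inr j : α ⊕ β) ∈ ((↑X : Set (α ⊕ β))ᶜ) := by
    intro j; simp [hX]
  -- trivial kernel of M
  have hker : ∀ y : β → ℝ, M *ᵥ y = 0 → y = 0 := by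
    intro y hy
    by_contra hy0
    apply hstar.2
    set N := adjMat (G.induce ((↑X : Set (α ⊕ β))ᶜ)) with hN
    have hNap : ∀ v w : ((↑X : Set (α ⊕ β))ᶜ : Set _),
        N v w = if G.Adj v.1 w.1 then 1 else 0 := by
      intro v w; simp [hN, adjMat]
    set x : ((↑X : Set (α ⊕ β))ᶜ : Set _) → ℝ := fun v => Sum.elim (fun _ => 0) y v.1
      with hxdef
    have hbij : Function.Bijective
        (fun j : β => (⟨Sum.inr j, hmemXc j⟩ : ((↑X : Set (α ⊕ β))ᶜ : Set _))) := by
      constructor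
      · intro j k h
        simpa using congrArg Subtype.val h
      · rintro ⟨s, hs⟩
        rcases s with a | j
        · exact absurd hs (by simp [hX])
        · exact ⟨j, rfl⟩
    have hCy : C *ᵥ y = μ • y := by
      have h := hMmul y
      rw [hy] at h
      have := sub_eq_zero.mp h.symm
      exact this.symm
    show Module.End.HasEigenvalue (Matrix.toLin' N) μ
    apply Module.End.hasEigenvalue_of_hasEigenvector (x := x)
    constructor
    · rw [Module.End.mem_eigenspace_iff, Matrix.toLin'_apply]
      funext v
      rcases v with ⟨s, hs⟩
      rcases s with a | j
      · exact absurd hs (by simp [hX])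
      · have hsum : (N *ᵥ x) ⟨Sum.inr j, hs⟩ = ∑ k : β, C j k * y k := by
          rw [Matrix.mulVec, dotProduct]
          rw [← Fintype.sum_bijective _ hbij _ _ (fun k => ?_)]
          simp [hNap, hCap, hAap, hxdef]
        have : (∑ k : β, C j k * y k) = μ * y j := by
          have := congrFun hCy j
          simpa [Matrix.mulVec, dotProduct] using this
        simp only [Pi.smul_apply, smul_eq_mul]
        rw [hsum, this]
        rfl
    · intro h0
      obtain ⟨j, hj⟩ := Function.ne_iff.mp hy0
      apply hj
      have := congrFun h0 ⟨Sum.inr j, hmemXc j⟩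
      simpa [hxdef] using this
  have hinj : Function.Injective M.mulVec := by
    intro y z h
    have := hker (y - z) (by rw [Matrix.mulVec_sub, h, sub_self])
    exact sub_eq_zero.mp this
  have hdet : IsUnit M.det :=
    (Matrix.isUnit_iff_isUnit_det M).mp (Matrix.mulVec_injective_iff_isUnit.mp hinj)
  -- mulVec of A at an inr coordinate
  have hAmul : ∀ (w : (α ⊕ β) → ℝ) (j : β),
      (A *ᵥ w) (Sum.inr j)
        = (∑ a : α, A (Sum.inr j) (Sum.inl a) * w (Sum.inl a))
          + (C *ᵥ fun k => w (Sum.inr k)) j := by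
    intro w j
    rw [Matrix.mulVec, dotProduct, Fintype.sum_sum_type]
    congr 1
    rw [Matrix.mulVec, dotProduct]
    exact Finset.sum_congr rfl fun k _ => by rw [hCap]
  -- eigenspace and restriction map
  set E := Module.End.eigenspace (Matrix.toLin' A) μ with hE
  have hmemE : ∀ v : (α ⊕ β) → ℝ, v ∈ E ↔ A *ᵥ v = μ • v := by
    intro v
    rw [hE, Module.End.mem_eigenspace_iff, Matrix.toLin'_apply]
  set r : E →ₗ[ℝ] (α → ℝ) := (LinearMap.funLeft ℝ ℝ Sum.inl).comp E.subtype with hr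
  have hrinj : Function.Injective r := by
    rw [← LinearMap.ker_eq_bot, LinearMap.ker_eq_bot']
    intro v hv
    have hvl : ∀ a : α, (v : (α ⊕ β) → ℝ) (Sum.inl a) = 0 := fun a => congrFun hv a
    have hveq := (hmemE v).mp v.2
    have hyz : (fun j => (v : (α ⊕ β) → ℝ) (Sum.inr j)) = 0 := by
      apply hker
      rw [hMmul]
      funext j
      have h1 := congrFun hveq (Sum.inr j)
      rw [hAmul] at h1
      simp only [hvl, mul_zero, Finset.sum_const_zero, zero_add] at h1
      simp only [Pi.sub_apply, Pi.smul_apply, smul_eq_mul, Pi.zero_apply] at h1 ⊢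
      rw [h1]
      ring
    apply Subtype.ext
    funext s
    rcases s with a | j
    · exact hvl a
    · exact congrFun hyz j
  have hfr : Module.finrank ℝ E = Fintype.card α := by
    have h1 := hstar.1
    rw [hX, Finset.card_map, Finset.card_univ] at h1
    exact h1.symm
  have hrsurj : Function.Surjective r := by
    have hfd : FiniteDimensional ℝ E := inferInstance
    refine (LinearMap.injective_iff_surjective_of_finrank_eq_finrank ?_).mp hrinj
    rw [hfr, Module.finrank_fintype_fun_eq_card]
  obtain ⟨v, hv⟩ := hrsurj (fun i => if i = u then (1 : ℝ) else 0)
  set w : (α ⊕ β) → ℝ := (v : (α ⊕ β) → ℝ) with hwdef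
  have hwl : ∀ a : α, w (Sum.inl a) = if a = u then 1 else 0 := fun a => congrFun hv a
  have hw : A *ᵥ w = μ • w := (hmemE w).mp v.2
  set y : β → ℝ := fun j => w (Sum.inr j) with hydef
  have hMy : M *ᵥ y = b u := by
    rw [hMmul]
    funext j
    have h1 := congrFun hw (Sum.inr j)
    rw [hAmul] at h1
    have hsum : (∑ a : α, A (Sum.inr j) (Sum.inl a) * w (Sum.inl a)) = b u j := by
      simp only [hwl, mul_ite, mul_one, mul_zero]
      rw [Finset.sum_ite_eq' Finset.univ u (fun a => A (Sum.inr j) (Sum.inl a))]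
      simp only [Finset.mem_univ, if_true]
      rw [hAap, hb, SimpleGraph.adj_comm]
    rw [hsum] at h1
    simp only [Pi.sub_apply, Pi.smul_apply, smul_eq_mul] at h1 ⊢
    linarith
  have hyv : M⁻¹ *ᵥ b u = y := by
    rw [← hMy, Matrix.mulVec_mulVec, Matrix.nonsing_inv_mul M hdet, Matrix.one_mulVec]
  have hdot := hnm w hw
  have hsplit : w ⬝ᵥ (fun _ => 1) = (∑ a : α, w (Sum.inl a)) + ∑ j : β, y j := by
    simp [dotProduct, Fintype.sum_sum_type, hydef]
  have h1 : (∑ a : α, w (Sum.inl a)) = 1 := by simp [hwl]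
  have hys : (∑ j : β, y j) = -1 := by
    rw [hsplit, h1] at hdot
    linarith
  have hMsym : Mᵀ = M := by
    rw [hMdef, Matrix.transpose_sub, Matrix.transpose_smul, Matrix.transpose_one]
    congr 1
    funext j k
    rw [Matrix.transpose_apply, hCap, hCap]
    exact hAsym _ _
  have hMisym : (M⁻¹)ᵀ = M⁻¹ := by
    rw [Matrix.transpose_nonsing_inv, hMsym]
  have final : b u ⬝ᵥ (M⁻¹ *ᵥ fun _ => 1) = (M⁻¹ *ᵥ b u) ⬝ᵥ (fun _ => 1) := by
    rw [Matrix.dotProduct_mulVec]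
    congr 1
    conv_lhs => rw [← hMisym]
    rw [Matrix.vecMul_transpose]
  rw [final, hyv]
  simpa [dotProduct] using hys

end
end

section
/- Under the same hypotheses (r-regular G, star set X for non-main μ, G - X = K_s ∇ tK_1, s,t ≥ 2), for each u ∈ X with a = |N_{K_s}(u)| and b = |N_{tK_1}(u)|, the condition ⟨b_u, j⟩ = -1 yields the linear relation a(μ+t) + b(μ+1) = s(μ+t) - μ(μ+1). -/
/-!
Since `X` is a star set, restricting the `μ`-eigenspace to `X` is injective (an eigenvector
vanishing on `X` restricts to an eigenvector of `G - X`) between spaces of dimension `|X|`, so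
there is a `μ`-eigenvector `x` with `x|_X = e_u`. Summing the eigenvalue equation over the
vertices of `K_s` and over those of `tK_1` gives two linear equations in `P = Σ_{K_s} x` and
`Q = Σ_{tK_1} x`; as `μ` is non-main, `1 + P + Q = 0`, and eliminating `P` and `Q` leaves the
relation.
-/

open Matrix

open scoped Classical

noncomputable section

variable {V : Type*} [Fintype V] [DecidableEq V]

/-- The join `G ∇ H` of two graphs. -/
def joinG {α β : Type*} (G : SimpleGraph α) (H : SimpleGraph β) : SimpleGraph (α ⊕ β) where
  Adj u v :=
    match u, v with
    | .inl a, .inl b => G.Adj a b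
    | .inr a, .inr b => H.Adj a b
    | _, _ => True
  symm := ⟨by rintro (a | a) (b | b) h <;> simp_all <;> exact h.symm⟩
  loopless := ⟨by
    rintro (a | a) h
    · exact G.loopless.irrefl _ h
    · exact H.loopless.irrefl _ h⟩

/-- The perfect matching graph `nK_2` on `Fin n × Fin 2`. -/
def matchingG (n : ℕ) : SimpleGraph (Fin n × Fin 2) where
  Adj u v := u.1 = v.1 ∧ u.2 ≠ v.2
  symm := ⟨by rintro ⟨i, a⟩ ⟨j, b⟩ ⟨h1, h2⟩; exact ⟨h1.symm, h2.symm⟩⟩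
  loopless := ⟨by rintro ⟨i, a⟩ ⟨_, h⟩; exact h rfl⟩

open Finset Sum

lemma eq_zero_of_mulVec_eq_smul_of_forall_mem_eq_zero {G : SimpleGraph V} {μ : ℝ}
    {X : Finset V} (hμ : ¬ IsEigen (G.induce ((↑X : Set V)ᶜ)) μ) {x : V → ℝ}
    (hx : adjMat G *ᵥ x = μ • x) (hxX : ∀ v ∈ X, x v = 0) : x = 0 := by
  set z : ↥((↑X : Set V)ᶜ) → ℝ := fun v => x v
  have hz : adjMat (G.induce ((↑X : Set V)ᶜ)) *ᵥ z = μ • z := by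
    ext v
    calc (adjMat (G.induce ((↑X : Set V)ᶜ)) *ᵥ z) v
        = ∑ w ∈ Xᶜ, adjMat G v w * x w :=
          (sum_subtype _ (by simp) (fun w => adjMat G v w * x w)).symm
      _ = ∑ w, adjMat G v w * x w := by
          rw [← sum_compl_add_sum X, sum_eq_zero (s := X) (by simp_all), add_zero]
      _ = (μ • z) v := congrFun hx v
  by_contra hne
  obtain ⟨v, hv⟩ := Function.ne_iff.mp hne
  have hvX : v ∉ X := fun h => hv (hxX v h)
  refine hμ (Module.End.hasEigenvalue_of_hasEigenvector (x := z) ⟨?_, ?_⟩)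
  · rwa [Module.End.mem_eigenspace_iff, Matrix.toLin'_apply]
  · exact fun h0 => hv (congrFun h0 ⟨v, hvX⟩)

lemma IsStarSet.exists_mulVec_eq_smul_extending {G : SimpleGraph V} {μ : ℝ} {X : Finset V}
    (hX : IsStarSet G μ X) (f : V → ℝ) :
    ∃ x : V → ℝ, adjMat G *ᵥ x = μ • x ∧ ∀ v ∈ X, x v = f v := by
  let E := Module.End.eigenspace (Matrix.toLin' (adjMat G)) μ
  let restrict : E →ₗ[ℝ] (X → ℝ) := LinearMap.funLeft ℝ ℝ Subtype.val ∘ₗ E.subtype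
  have mem_E : ∀ x, x ∈ E ↔ adjMat G *ᵥ x = μ • x := fun x => by
    rw [Module.End.mem_eigenspace_iff, Matrix.toLin'_apply]
  have hinj : Function.Injective restrict := by
    rw [← LinearMap.ker_eq_bot, Submodule.eq_bot_iff]
    rintro ⟨x, hx⟩ hx0
    exact Subtype.ext (eq_zero_of_mulVec_eq_smul_of_forall_mem_eq_zero hX.2 ((mem_E x).1 hx)
      fun v hv => congrFun hx0 ⟨v, hv⟩)
  have hdim : Module.finrank ℝ E = Module.finrank ℝ (X → ℝ) := by
    rw [Module.finrank_fintype_fun_eq_card, Fintype.card_coe, hX.1, eigMult]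
  obtain ⟨⟨x, hx⟩, hxf⟩ :=
    (LinearMap.injective_iff_surjective_of_finrank_eq_finrank hdim).1 hinj fun v => f v
  exact ⟨x, (mem_E x).1 hx, fun v hv => congrFun hxf ⟨v, hv⟩⟩

lemma sum_adjMat_mulVec_comp {W ι : Type*} [Fintype W] [Fintype ι] (G : SimpleGraph W)
    (e : ι → W) (x : W → ℝ) :
    ∑ i, (adjMat G *ᵥ x) (e i) = ∑ w, (#{i | G.Adj w (e i)} : ℝ) * x w := by
  simp only [mulVec, dotProduct, adjMat, SimpleGraph.adjMatrix_apply, ite_mul, one_mul, zero_mul]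
  rw [sum_comm]
  refine sum_congr rfl fun w _ => ?_
  rw [sum_ite, sum_const_zero, add_zero, sum_const, nsmul_eq_mul]
  simp [G.adj_comm]

section JoinStarComplement

variable {α : Type*} [Fintype α] {s t : ℕ} {G : SimpleGraph (α ⊕ (Fin s ⊕ Fin t))}
  {μ : ℝ} {x : α ⊕ (Fin s ⊕ Fin t) → ℝ}

lemma mul_sum_clique_eq
    (hH : ∀ i j, G.Adj (inr i) (inr j) ↔
      (joinG (⊤ : SimpleGraph (Fin s)) (⊥ : SimpleGraph (Fin t))).Adj i j)
    (hx : adjMat G *ᵥ x = μ • x) :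
    μ * ∑ i, x (inr (inl i)) = ∑ v, (#{i | G.Adj (inl v) (inr (inl i))} : ℝ) * x (inl v)
      + (s - 1) * ∑ i, x (inr (inl i)) + s * ∑ k, x (inr (inr k)) := by
  calc μ * ∑ i, x (inr (inl i)) = ∑ i, (adjMat G *ᵥ x) (inr (inl i)) := by
        simp [hx, mul_sum]
    _ = _ := sum_adjMat_mulVec_comp G _ x
    _ = _ := by
      have hcard (j : Fin s) : (#{i | ¬j = i} : ℝ) = s - 1 := by
        -- the filter carries the classical decidability instance of the ambient `open Classical`
        rw [filter_congr_decidable]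
        simp [filter_ne, Nat.cast_pred j.pos]
      simp [Fintype.sum_sum_type, hH, joinG, hcard, sub_mul, mul_sum]
      ring

lemma mul_sum_coclique_eq
    (hH : ∀ i j, G.Adj (inr i) (inr j) ↔
      (joinG (⊤ : SimpleGraph (Fin s)) (⊥ : SimpleGraph (Fin t))).Adj i j)
    (hx : adjMat G *ᵥ x = μ • x) :
    μ * ∑ k, x (inr (inr k)) = ∑ v, (#{k | G.Adj (inl v) (inr (inr k))} : ℝ) * x (inl v)
      + t * ∑ i, x (inr (inl i)) := by
  calc μ * ∑ k, x (inr (inr k)) = ∑ k, (adjMat G *ᵥ x) (inr (inr k)) := by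
        simp [hx, mul_sum]
    _ = _ := sum_adjMat_mulVec_comp G _ x
    _ = _ := by
      simp [Fintype.sum_sum_type, hH, joinG, mul_sum]

end JoinStarComplement

theorem linear_relation_general {α : Type*} [Fintype α] [DecidableEq α] (s t : ℕ)
    (G : SimpleGraph (α ⊕ (Fin s ⊕ Fin t)))
    (μ : ℝ) (hnm : IsNonMain G μ)
    (X : Finset (α ⊕ (Fin s ⊕ Fin t)))
    (hX : X = Finset.univ.map ⟨Sum.inl, Sum.inl_injective⟩)
    (hstar : IsStarSet G μ X)
    (hH : ∀ i j, G.Adj (Sum.inr i) (Sum.inr j) ↔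
      (joinG (⊤ : SimpleGraph (Fin s)) (⊥ : SimpleGraph (Fin t))).Adj i j)
    (a b : α → ℕ)
    (ha : ∀ u, a u = (Finset.univ.filter
      (fun i : Fin s => G.Adj (Sum.inl u) (Sum.inr (Sum.inl i)))).card)
    (hb : ∀ u, b u = (Finset.univ.filter
      (fun i : Fin t => G.Adj (Sum.inl u) (Sum.inr (Sum.inr i)))).card) :
    ∀ u : α, (a u : ℝ) * (μ + t) + (b u : ℝ) * (μ + 1)
      = s * (μ + t) - μ * (μ + 1) := by
  intro u
  obtain ⟨x, hx, hxX⟩ :=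
    hstar.exists_mulVec_eq_smul_extending fun v => if v = inl u then 1 else 0
  have hxα (v : α) : x (inl v) = if v = u then 1 else 0 := by
    rw [hxX _ (by simp [hX])]
    simp
  have hclique := mul_sum_clique_eq hH hx
  have hcoclique := mul_sum_coclique_eq hH hx
  have hones : 1 + ∑ i, x (inr (inl i)) + ∑ k, x (inr (inr k)) = 0 := by
    simpa [dotProduct, Fintype.sum_sum_type, hxα, add_assoc] using hnm x hx
  simp only [hxα, mul_ite, mul_one, mul_zero, sum_ite_eq', mem_univ, if_true, ← ha, ← hb]
    at hclique hcoclique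
  -- with these multipliers `1`, `P` and `Q` all acquire the coefficient `μ² + μ - sμ - st`
  linear_combination
    -(μ + t) * hclique - (μ + 1) * hcoclique + (μ ^ 2 + μ - s * μ - s * t) * hones

/-- In an `r`-regular graph `G` with star set `X` (the left-hand vertices) for a
non-main eigenvalue `μ` and star complement `K_s ∇ tK_1`, each `u ∈ X` with
`a = |N_{K_s}(u)|`, `b = |N_{tK_1}(u)|` satisfies
`a(μ+t) + b(μ+1) = s(μ+t) - μ(μ+1)`. -/
theorem linear_relation {α : Type*} [Fintype α] [DecidableEq α] (s t : ℕ)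
    (hs : 2 ≤ s) (ht : 2 ≤ t) (r : ℕ) (G : SimpleGraph (α ⊕ (Fin s ⊕ Fin t)))
    (hreg : G.IsRegularOfDegree r) (μ : ℝ) (hμ : IsEigen G μ) (hnm : IsNonMain G μ)
    (X : Finset (α ⊕ (Fin s ⊕ Fin t)))
    (hX : X = Finset.univ.map ⟨Sum.inl, Sum.inl_injective⟩)
    (hstar : IsStarSet G μ X)
    (hH : ∀ i j, G.Adj (Sum.inr i) (Sum.inr j) ↔
      (joinG (⊤ : SimpleGraph (Fin s)) (⊥ : SimpleGraph (Fin t))).Adj i j)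
    (a b : α → ℕ)
    (ha : ∀ u, a u = (Finset.univ.filter
      (fun i : Fin s => G.Adj (Sum.inl u) (Sum.inr (Sum.inl i)))).card)
    (hb : ∀ u, b u = (Finset.univ.filter
      (fun i : Fin t => G.Adj (Sum.inl u) (Sum.inr (Sum.inr i)))).card) :
    ∀ u : α, (a u : ℝ) * (μ + t) + (b u : ℝ) * (μ + 1)
      = s * (μ + t) - μ * (μ + 1) :=
  linear_relation_general s t G μ hnm X hX hstar hH a b ha hb
end
end

section
/- The eigenvalues of K_s ∇ tK_1 (s,t ≥ 2) are exactly 0, -1, and the two roots of x² - (s-1)x - st; in particular a real number μ is not an eigenvalue of K_s ∇ tK_1 if and only if μ ≠ 0, μ ≠ -1, and μ² - (s-1)μ - st ≠ 0. -/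
open Matrix

lemma AH_mulVec (s t : ℕ) (v : Fin s ⊕ Fin t → ℝ) (k : Fin s ⊕ Fin t) :
    (AH s t).mulVec v k = Sum.elim
      (fun i => (∑ i', v (Sum.inl i')) - v (Sum.inl i) + ∑ j, v (Sum.inr j))
      (fun _ => ∑ i', v (Sum.inl i')) k := by
  cases k with
  | inl i =>
    simp [AH, Jmat, Matrix.mulVec, dotProduct, Fintype.sum_sum_type,
      Matrix.one_apply, sub_mul, Finset.sum_sub_distrib, Matrix.sub_apply]
  | inr j =>
    simp [AH, Jmat, Matrix.mulVec, dotProduct, Fintype.sum_sum_type]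


/-- The eigenvalues of `K_s ∇ tK_1` are exactly `0`, `-1`, and the roots of
`x² - (s-1)x - st`. -/
theorem AH_eigenvalues (s t : ℕ) (hs : 2 ≤ s) (ht : 2 ≤ t) (μ : ℝ) :
    Module.End.HasEigenvalue (Matrix.toLin' (AH s t)) μ ↔
      μ = 0 ∨ μ = -1 ∨ μ ^ 2 - ((s : ℝ) - 1) * μ - s * t = 0 := by
  have hs0 : (0:ℝ) < s := by positivity
  have ht0 : (0:ℝ) < t := by exact_mod_cast Nat.lt_of_lt_of_le Nat.zero_lt_two ht
  constructor
  · intro h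
    by_contra hcon
    push_neg at hcon
    obtain ⟨h0, h1, hq⟩ := hcon
    obtain ⟨v, hv⟩ := h.exists_hasEigenvector
    have heq : ∀ k, (AH s t).mulVec v k = μ * v k := by
      intro k
      have := hv.apply_eq_smul
      have h2 := congrFun this k
      simpa [Matrix.toLin'_apply] using h2
    set X := ∑ i', v (Sum.inl i') with hX
    set Y := ∑ j, v (Sum.inr j) with hY
    have e1 : ∀ i, X - v (Sum.inl i) + Y = μ * v (Sum.inl i) := fun i => by
      simpa [AH_mulVec] using heq (Sum.inl i)
    have e2 : ∀ j, X = μ * v (Sum.inr j) := fun j => by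
      simpa [AH_mulVec] using heq (Sum.inr j)
    -- sum the equations
    have s1 : (s:ℝ) * X - X + s * Y = μ * X := by
      have := Finset.sum_congr rfl (fun i (_ : i ∈ Finset.univ) => e1 i)
      simpa [Finset.sum_sub_distrib, Finset.sum_add_distrib, ← Finset.mul_sum,
        Finset.sum_const, nsmul_eq_mul, ← hX, ← hY] using this
    have s2 : (t:ℝ) * X = μ * Y := by
      have := Finset.sum_congr rfl (fun j (_ : j ∈ Finset.univ) => e2 j)
      simpa [Finset.sum_const, nsmul_eq_mul, ← Finset.mul_sum, ← hX, ← hY] using this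
    have hXzero : X = 0 := by
      have key : (μ ^ 2 - ((s:ℝ) - 1) * μ - s * t) * X = 0 := by
        linear_combination (-μ) * s1 - (s:ℝ) * s2
      exact (mul_eq_zero.1 key).resolve_left hq
    have hYzero : Y = 0 := by
      have := s2
      rw [hXzero, mul_zero] at this
      rcases mul_eq_zero.1 this.symm with h | h
      · exact absurd h h0
      · exact h
    have hvz : v = 0 := by
      funext k
      cases k with
      | inl i =>
        have := e1 i
        rw [hXzero, hYzero] at this
        have : (μ + 1) * v (Sum.inl i) = 0 := by linarith
        rcases mul_eq_zero.1 this with h | h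
        · exact absurd (by linarith : μ = -1) h1
        · exact h
      | inr j =>
        have := e2 j
        rw [hXzero] at this
        rcases mul_eq_zero.1 this.symm with h | h
        · exact absurd h h0
        · exact h
    exact hv.2 hvz
  · intro h
    obtain ⟨s', rfl⟩ : ∃ s', s = s' + 2 := ⟨s - 2, by omega⟩
    obtain ⟨t', rfl⟩ : ∃ t', t = t' + 2 := ⟨t - 2, by omega⟩
    rcases h with h0 | h1 | hq
    · -- μ = 0, eigenvector supported on second block
      refine Module.End.hasEigenvalue_of_hasEigenvector (x := Sum.elim 0
        (Pi.single (0 : Fin (t'+2)) 1 - Pi.single 1 1)) ⟨?_, ?_⟩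
      · rw [Module.End.mem_eigenspace_iff]
        funext k
        rw [Matrix.toLin'_apply, AH_mulVec]
        cases k <;> simp [Finset.sum_sub_distrib, Finset.sum_pi_single, h0]
      · intro hz
        have := congrFun hz (Sum.inr 0)
        simp [Pi.single_apply] at this
    · refine Module.End.hasEigenvalue_of_hasEigenvector (x := Sum.elim
        (Pi.single (0 : Fin (s'+2)) 1 - Pi.single 1 1) 0) ⟨?_, ?_⟩
      · rw [Module.End.mem_eigenspace_iff]
        funext k
        rw [Matrix.toLin'_apply, AH_mulVec]
        cases k with
        | inl i =>
          simp [Finset.sum_sub_distrib, Finset.sum_pi_single, h1, Pi.single_apply]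
        | inr j =>
          simp [Finset.sum_sub_distrib, Finset.sum_pi_single, h1]
      · intro hz
        have := congrFun hz (Sum.inl 0)
        simp [Pi.single_apply] at this
    · refine Module.End.hasEigenvalue_of_hasEigenvector (x := Sum.elim
        (fun _ => μ) (fun _ => ((s' + 2 : ℕ) : ℝ))) ⟨?_, ?_⟩
      · rw [Module.End.mem_eigenspace_iff]
        funext k
        rw [Matrix.toLin'_apply, AH_mulVec]
        cases k with
        | inl i =>
          simp [Finset.sum_const, nsmul_eq_mul]
          push_cast at hq ⊢
          linear_combination -hq
        | inr j =>
          simp [Finset.sum_const, nsmul_eq_mul]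
          ring
      · intro hz
        have h2 := congrFun hz (Sum.inr 0)
        simp at h2
        have h3 : (0:ℝ) ≤ (s':ℝ) := Nat.cast_nonneg _
        linarith
end
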